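/- With v ≥ 2, A = Id + J, B = −(Id+J), M = (2/(v-1))(Id+J): the sum of (F(i)−F(j))(F(i)−F(j))ᵀ over all pairs of 4-tuples with i₁≠j₁ and i₂=j₂, i₃=j₃, i₄=j₄ equals 2(v-1) A^{⊗4} − 2 B ⊗ A^{⊗3} = (1/8)v(v-1)⁴ M^{⊗4}. -/

import Mathlib

open Kronecker

/-- Effects-type coding of a `v`-level factor. -/
def eff (v : ℕ) (i : Fin v) : Fin (v - 1) → ℝ :=
  fun j => if (i : ℕ) = v - 1 then -1 else if (i : ℕ) = (j : ℕ) then 1 else 0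

/-- All-ones matrix. -/
def Jmat (v : ℕ) : Matrix (Fin (v - 1)) (Fin (v - 1)) ℝ := Matrix.of fun _ _ => 1

/-- `A = Id + J = ∑ᵢ f(i)f(i)ᵀ`. -/
noncomputable def Amat (v : ℕ) : Matrix (Fin (v - 1)) (Fin (v - 1)) ℝ := 1 + Jmat v

/-- `B = -(Id + J) = ∑_{i≠j} f(i)f(j)ᵀ`. -/
noncomputable def Bmat (v : ℕ) : Matrix (Fin (v - 1)) (Fin (v - 1)) ℝ := -(1 + Jmat v)

/-- One-way layout information matrix `M = (2/(v-1))(Id + J)`. -/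
noncomputable def Mmat (v : ℕ) : Matrix (Fin (v - 1)) (Fin (v - 1)) ℝ :=
  (2 / ((v : ℝ) - 1)) • ((1 : Matrix (Fin (v - 1)) (Fin (v - 1)) ℝ) + Jmat v)

/-- `F(i) = f(i₁) ⊗ f(i₂) ⊗ f(i₃) ⊗ f(i₄)` (Kronecker product of vectors). -/
def Fvec (v : ℕ) (i : Fin v × Fin v × Fin v × Fin v) :
    ((Fin (v - 1) × Fin (v - 1)) × Fin (v - 1)) × Fin (v - 1) → ℝ :=
  fun p => eff v i.1 p.1.1.1 * eff v i.2.1 p.1.1.2 * eff v i.2.2.1 p.1.2 * eff v i.2.2.2 p.2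

/-!
If `i` and `j` differ only in the first factor, `F(i) - F(j) = (f(i₁) - f(j₁)) ⊗ f(i₂) ⊗ f(i₃) ⊗ f(i₄)`,
and pairs with `i₁ = j₁` contribute nothing, so the sum factorises as
`(∑_{i₁, j₁} (f(i₁) - f(j₁))(f(i₁) - f(j₁))ᵀ) ⊗ A ⊗ A ⊗ A`. Expanding the first factor gives
`2v A - 2 (∑ f)(∑ f)ᵀ = 2v A`, since the effects coding sums to zero over the levels.
As `B = -A` and `M = (2/(v-1)) A`, both right-hand sides are also `2v A^{⊗4}`.
-/

namespace Matrix

variable {ι l m n p α : Type*}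

theorem sum_kronecker [Fintype ι] [NonUnitalNonAssocSemiring α] (A : ι → Matrix l m α)
    (B : Matrix n p α) : (∑ k, A k) ⊗ₖ B = ∑ k, A k ⊗ₖ B := by
  ext ⟨a, b⟩ ⟨c, d⟩
  simp only [kronecker_apply, sum_apply, Finset.sum_mul]

theorem kronecker_sum [Fintype ι] [NonUnitalNonAssocSemiring α] (A : Matrix l m α)
    (B : ι → Matrix n p α) : A ⊗ₖ (∑ k, B k) = ∑ k, A ⊗ₖ B k := by
  ext ⟨a, b⟩ ⟨c, d⟩
  simp only [kronecker_apply, sum_apply, Finset.mul_sum]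

def kroneckerVec [Mul α] (x : m → α) (y : n → α) : m × n → α := fun q => x q.1 * y q.2

theorem sub_kroneckerVec [NonUnitalNonAssocRing α] (x y : m → α) (z : n → α) :
    kroneckerVec x z - kroneckerVec y z = kroneckerVec (x - y) z := by
  ext q
  simp only [kroneckerVec, Pi.sub_apply, sub_mul]

theorem vecMulVec_kroneckerVec [CommSemigroup α] (x x' : m → α) (y y' : n → α) :
    vecMulVec (kroneckerVec x y) (kroneckerVec x' y') = vecMulVec x x' ⊗ₖ vecMulVec y y' := by
  ext ⟨a, b⟩ ⟨c, d⟩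
  simp only [vecMulVec_apply, kroneckerVec, kronecker_apply]
  exact mul_mul_mul_comm _ _ _ _

theorem sum_sum_vecMulVec_sub [Fintype ι] [CommRing α] (x : ι → m → α) :
    ∑ i, ∑ j, vecMulVec (x i - x j) (x i - x j)
      = (2 * Fintype.card ι : α) • ∑ i, vecMulVec (x i) (x i)
        - (2 : α) • vecMulVec (∑ i, x i) (∑ i, x i) := by
  ext a b
  simp only [sum_apply, vecMulVec_apply, Pi.sub_apply, sub_apply, smul_apply, smul_eq_mul,
    Finset.sum_apply]
  have expand : ∀ i j, (x i a - x j a) * (x i b - x j b)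
      = x i a * x i b + x j a * x j b - (x i a * x j b + x j a * x i b) := fun i j => by ring
  have cross : ∑ i, ∑ j, x i a * x j b = (∑ i, x i a) * ∑ j, x j b :=
    (Finset.sum_mul_sum _ _ _ _).symm
  have cross' : ∑ i, ∑ j, x j a * x i b = (∑ i, x i a) * ∑ j, x j b := by
    rw [Finset.sum_comm]; exact cross
  have diag : ∑ i, ∑ _j : ι, x i a * x i b = Fintype.card ι * ∑ i, x i a * x i b := by
    rw [Finset.sum_comm]; simp only [Finset.sum_const, Finset.card_univ, nsmul_eq_mul]
  have diag' : ∑ _i : ι, ∑ j, x j a * x j b = Fintype.card ι * ∑ j, x j a * x j b := by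
    simp only [Finset.sum_const, Finset.card_univ, nsmul_eq_mul]
  simp only [expand, Finset.sum_sub_distrib, Finset.sum_add_distrib, cross, cross', diag, diag']
  ring

end Matrix

theorem Fintype.sum_sum_ite_fst_ne_and_snd_eq {α β M : Type*} [Fintype α] [Fintype β]
    [DecidableEq α] [DecidableEq β] [AddCommMonoid M] (g : α × β → α × β → M)
    (hg : ∀ i, g i i = 0) :
    ∑ i, ∑ j, (if i.1 ≠ j.1 ∧ i.2 = j.2 then g i j else 0) = ∑ a, ∑ a', ∑ b, g (a, b) (a', b) := by
  have drop_ne : ∀ i j, (if i.1 ≠ j.1 ∧ i.2 = j.2 then g i j else 0)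
      = if i.2 = j.2 then g i j else 0 := by
    intro i j
    rcases eq_or_ne i j with rfl | hij
    · simp only [ne_eq, not_true_eq_false, false_and, hg, ite_self]
    · grind [Prod.ext]
  simp only [drop_ne, Fintype.sum_prod_type, Finset.sum_ite_eq, Finset.mem_univ, if_true]
  exact Finset.sum_congr rfl fun a _ => Finset.sum_comm

open Matrix

theorem sum_eff_mul {v : ℕ} (a : Fin (v - 1)) (g : Fin v → ℝ) :
    ∑ i, eff v i a * g i
      = g (Fin.castLE (v.sub_le 1) a)
        - g ⟨v - 1, Nat.sub_one_lt_of_lt (Nat.lt_of_sub_pos a.pos)⟩ := by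
  set top : Fin v := ⟨v - 1, _⟩
  have indicators : ∀ i, eff v i a
      = (if i = Fin.castLE (v.sub_le 1) a then 1 else 0) - (if i = top then 1 else 0) := by
    intro i
    have := a.isLt
    simp only [eff, top, Fin.ext_iff, Fin.val_castLE]
    split_ifs <;> first | omega | norm_num
  simp only [indicators, sub_mul, ite_mul, one_mul, zero_mul, Finset.sum_sub_distrib,
    Finset.sum_ite_eq', Finset.mem_univ, if_true]

theorem sum_eff (v : ℕ) (a : Fin (v - 1)) : ∑ i, eff v i a = 0 := by
  simpa using sum_eff_mul a 1

theorem sum_vecMulVec_eff (v : ℕ) : ∑ i, vecMulVec (eff v i) (eff v i) = Amat v := by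
  ext a b
  have := a.isLt
  simp only [Matrix.sum_apply, vecMulVec_apply]
  rw [sum_eff_mul]
  simp only [Amat, Jmat, Matrix.add_apply, of_apply, one_apply, eff, Fin.val_castLE, Fin.ext_iff]
  split_ifs <;> first | omega | norm_num

theorem sum_sum_vecMulVec_eff_sub (v : ℕ) :
    ∑ i, ∑ j, vecMulVec (eff v i - eff v j) (eff v i - eff v j) = (2 * v : ℝ) • Amat v := by
  have sum_eq_zero : ∑ i, eff v i = 0 :=
    funext fun a => by rw [Finset.sum_apply, sum_eff, Pi.zero_apply]
  rw [sum_sum_vecMulVec_sub, sum_vecMulVec_eff, sum_eq_zero, vecMulVec_zero, smul_zero, sub_zero,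
    Fintype.card_fin]

theorem Fvec_eq (v : ℕ) (i : Fin v × Fin v × Fin v × Fin v) :
    Fvec v i = kroneckerVec (kroneckerVec (kroneckerVec (eff v i.1) (eff v i.2.1))
      (eff v i.2.2.1)) (eff v i.2.2.2) := rfl

theorem sum_vecMulVec_Fvec_sub_of_fst_ne (v : ℕ) :
    ∑ i, ∑ j, (if i.1 ≠ j.1 ∧ i.2 = j.2 then
        vecMulVec (Fvec v i - Fvec v j) (Fvec v i - Fvec v j) else 0)
      = (2 * v : ℝ) • (Amat v ⊗ₖ Amat v ⊗ₖ Amat v ⊗ₖ Amat v) := by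
  rw [Fintype.sum_sum_ite_fst_ne_and_snd_eq _ fun i => by rw [sub_self, vecMulVec_zero]]
  simp only [Fvec_eq, sub_kroneckerVec, vecMulVec_kroneckerVec, Fintype.sum_prod_type,
    ← kronecker_sum, ← sum_kronecker, sum_vecMulVec_eff, sum_sum_vecMulVec_eff_sub, smul_kronecker]

theorem stmt_7 (v : ℕ) (hv : 2 ≤ v) :
    (∑ i : Fin v × Fin v × Fin v × Fin v, ∑ j : Fin v × Fin v × Fin v × Fin v,
        if i.1 ≠ j.1 ∧ i.2.1 = j.2.1 ∧ i.2.2.1 = j.2.2.1 ∧ i.2.2.2 = j.2.2.2 then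
          Matrix.vecMulVec (Fvec v i - Fvec v j) (Fvec v i - Fvec v j) else 0)
      = (2 * ((v : ℝ) - 1)) • (Amat v ⊗ₖ Amat v ⊗ₖ Amat v ⊗ₖ Amat v)
        - (2 : ℝ) • (Bmat v ⊗ₖ Amat v ⊗ₖ Amat v ⊗ₖ Amat v) ∧
    (2 * ((v : ℝ) - 1)) • (Amat v ⊗ₖ Amat v ⊗ₖ Amat v ⊗ₖ Amat v)
        - (2 : ℝ) • (Bmat v ⊗ₖ Amat v ⊗ₖ Amat v ⊗ₖ Amat v)
      = ((1 / 8) * (v : ℝ) * ((v : ℝ) - 1) ^ 4) •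
          (Mmat v ⊗ₖ Mmat v ⊗ₖ Mmat v ⊗ₖ Mmat v) := by
  have hB : Bmat v = (-1 : ℝ) • Amat v := (neg_one_smul ℝ _).symm
  have hM : Mmat v = (2 / ((v : ℝ) - 1)) • Amat v := rfl
  have hv1 : (v : ℝ) - 1 ≠ 0 := by
    have : (2 : ℝ) ≤ v := by exact_mod_cast hv
    linarith
  have lhs : (2 * ((v : ℝ) - 1)) • (Amat v ⊗ₖ Amat v ⊗ₖ Amat v ⊗ₖ Amat v)
        - (2 : ℝ) • (Bmat v ⊗ₖ Amat v ⊗ₖ Amat v ⊗ₖ Amat v)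
      = (2 * v : ℝ) • (Amat v ⊗ₖ Amat v ⊗ₖ Amat v ⊗ₖ Amat v) := by
    rw [hB, smul_kronecker, smul_kronecker, smul_kronecker, smul_smul, ← sub_smul]
    congr 1
    ring
  refine ⟨?_, ?_⟩
  · simp only [← Prod.ext_iff]
    rw [sum_vecMulVec_Fvec_sub_of_fst_ne, lhs]
  · rw [lhs, hM]
    simp only [smul_kronecker, kronecker_smul, smul_smul]
    congr 1
    field_simp
    ring
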